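/- For every list L of integers, the list quicksort L is sorted in weakly ascending order (each element is less than or equal to the next one). -/

import Mathlib

def quicksort : List ℤ → List ℤ
  | [] => []
  | h :: t =>
      quicksort (t.filter (· ≤ h)) ++ h :: quicksort (t.filter (fun x => h < x))
termination_by l => l.length
decreasing_by
  all_goals simp only [List.length_cons]
  all_goals exact Nat.lt_succ_of_le (by rw [List.length_unattach]; exact (List.length_filter_le _ _).trans (le_of_eq (by simp)))

/-! Quicksort permutes its input, so everything in the left recursive call is at most the pivot
and everything in the right one exceeds it; sortedness then follows along the recursion. -/

-- `quicksort.induct`, with the `attach`/`unattach` wrappers left by well-founded recursion removed.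
@[elab_as_elim]
theorem quicksort_induction {motive : List ℤ → Prop} (nil : motive [])
    (cons : ∀ h t, motive (t.filter (· ≤ h)) → motive (t.filter (h < ·)) → motive (h :: t))
    (L : List ℤ) : motive L :=
  quicksort.induct motive nil
    (fun h t hle hgt => cons h t (by rwa [List.unattach_filter (hf := fun _ _ => rfl),
      List.unattach_attach] at hle) (by rwa [List.unattach_filter (hf := fun _ _ => rfl),
      List.unattach_attach] at hgt)) L

theorem quicksort_perm (L : List ℤ) : (quicksort L).Perm L := by
  induction L using quicksort_induction with
  | nil => simp [quicksort]
  | cons h t ihle ihgt =>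
    have hsplit : (t.filter (· ≤ h) ++ t.filter (h < ·)).Perm t := by
      simpa only [← decide_not, not_le] using List.filter_append_perm (· ≤ h) t
    rw [quicksort.eq_2]
    exact (List.perm_cons_append_cons h (hsplit.symm.trans (ihle.append ihgt).symm)).symm

theorem quicksort_pairwise (L : List ℤ) : (quicksort L).Pairwise (· ≤ ·) := by
  induction L using quicksort_induction with
  | nil => simp [quicksort]
  | cons h t ihle ihgt =>
    have hle : ∀ a ∈ quicksort (t.filter (· ≤ h)), a ≤ h := fun a ha =>
      of_decide_eq_true (List.mem_filter.mp ((quicksort_perm _).mem_iff.mp ha)).2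
    have hgt : ∀ b ∈ quicksort (t.filter (h < ·)), h < b := fun b hb =>
      of_decide_eq_true (List.mem_filter.mp ((quicksort_perm _).mem_iff.mp hb)).2
    rw [quicksort.eq_2, List.pairwise_append, List.pairwise_cons]
    refine ⟨ihle, ⟨fun b hb => (hgt b hb).le, ihgt⟩, fun a ha b hb => ?_⟩
    rcases List.mem_cons.mp hb with rfl | hb
    · exact hle a ha
    · exact (hle a ha).trans (hgt b hb).le

theorem quicksort_sorted (L : List ℤ) :
    List.Chain' (· ≤ ·) (quicksort L) :=
  (quicksort_pairwise L).isChain
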